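/- Let $u \in \mathscr{S}'(\mathbb{R}^n)$ with $\hat{u} \in C^i(\mathbb{R}^n)$ such that for each $|\beta| \le i$ there is $p_\beta \ge 0$ with $|\partial^\beta \hat{u}(\xi)| \le C_\beta \langle\xi\rangle^{p_\beta}$ (i.e. $u \in H^{-\infty,i}(\mathbb{R}^n)$). Let $\varphi \in \mathscr{S}(\mathbb{R}^n)$ and $u_\varepsilon = u * \varphi_\varepsilon$. Then for all multi-indices $\alpha$ and all $|\beta| \le i$ there exist $C_\alpha > 0$ and $p \ge 0$ depending only on $u$ and $i$ such that $|x^\beta \partial^\alpha u_\varepsilon(x)| \le C_\alpha \varepsilon^{-n-|\alpha|-p}$ for all $x \in \mathbb{R}^n$, $\varepsilon \in (0,1]$. In particular $|\partial^\alpha u_\varepsilon(x)| \le C_\alpha' \varepsilon^{-n-|\alpha|-p} \langle x\rangle^{-i}$. -/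

import Mathlib

set_option maxHeartbeats 1000000

open MeasureTheory Set
open scoped RealInnerProductSpace
open scoped FourierTransform
open Real

lemma aux_norm_smul_id {E : Type*} [NormedAddCommGroup E] [NormedSpace ℝ E] (c : ℝ) :
    ‖c • ContinuousLinearMap.id ℝ E‖ ≤ |c| := by
  refine (norm_smul_le c (ContinuousLinearMap.id ℝ E)).trans ?_
  calc ‖c‖ * ‖ContinuousLinearMap.id ℝ E‖ ≤ ‖c‖ * 1 :=
        mul_le_mul_of_nonneg_left ContinuousLinearMap.norm_id_le (norm_nonneg _)
    _ = |c| := by simp [Real.norm_eq_abs]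

-- aux 1: iterated derivative of f(c • ·)
lemma aux_comp_smul {E F : Type*} [NormedAddCommGroup E] [NormedSpace ℝ E]
    [NormedAddCommGroup F] [NormedSpace ℝ F]
    {f : E → F} {N : WithTop ℕ∞} (hf : ContDiff ℝ N f) (c : ℝ) {k : ℕ} (hk : (k:WithTop ℕ∞) ≤ N)
    (x : E) :
    ‖iteratedFDeriv ℝ k (fun y => f (c • y)) x‖ ≤ |c| ^ k * ‖iteratedFDeriv ℝ k f (c • x)‖ := by
  have h : (fun y => f (c • y)) = f ∘ (c • ContinuousLinearMap.id ℝ E) := rfl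
  rw [h, ContinuousLinearMap.iteratedFDeriv_comp_right _ hf x hk]
  refine (ContinuousMultilinearMap.norm_compContinuousLinearMap_le _ _).trans ?_
  rw [mul_comm]
  have h2 : (∏ _i : Fin k, ‖c • ContinuousLinearMap.id ℝ E‖) ≤ |c| ^ k := by
    calc (∏ _i : Fin k, ‖c • ContinuousLinearMap.id ℝ E‖) ≤ ∏ _i : Fin k, |c| :=
          Finset.prod_le_prod (fun _ _ => norm_nonneg _) (fun _ _ => aux_norm_smul_id c)
      _ = |c| ^ k := by simp
  exact mul_le_mul_of_nonneg_right h2 (norm_nonneg _)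

/-- The regularisation `u_ε = u * φ_ε` written on the Fourier side:
`u_ε(x) = (2π)^{-n} ∫ e^{i x·ξ} û(ξ) φ̂(εξ) dξ`, where `û = g`. -/
noncomputable def regConv (n : ℕ) (g : EuclideanSpace ℝ (Fin n) → ℂ)
    (φ : SchwartzMap (EuclideanSpace ℝ (Fin n)) ℂ) (ε : ℝ)
    (x : EuclideanSpace ℝ (Fin n)) : ℂ :=
  ((2 * Real.pi) ^ n : ℝ)⁻¹ •
    ∫ ξ : EuclideanSpace ℝ (Fin n),
      Complex.exp (Complex.I * ((⟪x, ξ⟫ : ℝ) : ℂ)) * g ξ *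
        ∫ v : EuclideanSpace ℝ (Fin n),
          Complex.exp (-(Complex.I * ((⟪v, ε • ξ⟫ : ℝ) : ℂ))) * φ v

lemma aux_reg_eq (n : ℕ) (g : EuclideanSpace ℝ (Fin n) → ℂ)
    (φ : SchwartzMap (EuclideanSpace ℝ (Fin n)) ℂ) (ε : ℝ) (x : EuclideanSpace ℝ (Fin n)) :
    regConv n g φ ε x =
      𝓕 (fun η : EuclideanSpace ℝ (Fin n) => g ((2*π) • η) * 𝓕 ⇑φ (ε • η)) (-x) := by
  have h2π : (2*π) ≠ 0 := by positivity
  have hinner : ∀ w : EuclideanSpace ℝ (Fin n),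
      (∫ v, Complex.exp (-(Complex.I * ((⟪v, w⟫:ℝ):ℂ))) * φ v) = 𝓕 ⇑φ ((2*π)⁻¹ • w) := by
    intro w
    rw [Real.fourier_eq']
    congr 1 with v
    rw [smul_eq_mul]
    congr 1
    rw [real_inner_smul_right]
    rw [show -2 * π * ((2*π)⁻¹ * (⟪v,w⟫:ℝ)) = -⟪v,w⟫ from by field_simp]
    push_cast
    ring
  unfold regConv
  simp_rw [hinner]
  have hchg := MeasureTheory.Measure.integral_comp_smul (volume : Measure (EuclideanSpace ℝ (Fin n)))
    (fun ξ => Complex.exp (Complex.I * ((⟪x, ξ⟫ : ℝ) : ℂ)) * g ξ * 𝓕 ⇑φ ((2*π)⁻¹ • (ε • ξ)))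
    (2*π)
  rw [finrank_euclideanSpace_fin] at hchg
  rw [show (∫ ξ : EuclideanSpace ℝ (Fin n),
      Complex.exp (Complex.I * ((⟪x, ξ⟫ : ℝ) : ℂ)) * g ξ * 𝓕 ⇑φ ((2*π)⁻¹ • (ε • ξ)))
      = |((2*π)^n)| • ∫ η : EuclideanSpace ℝ (Fin n),
        Complex.exp (Complex.I * ((⟪x, (2*π) • η⟫ : ℝ) : ℂ)) * g ((2*π) • η) *
          𝓕 ⇑φ ((2*π)⁻¹ • (ε • ((2*π) • η))) from by
    rw [hchg, smul_smul, abs_inv, mul_inv_cancel₀, one_smul]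
    simp [abs_ne_zero, pow_ne_zero, h2π]]
  rw [Real.fourier_eq', smul_smul]
  rw [show ((2 * Real.pi) ^ n : ℝ)⁻¹ * |((2*π)^n)| = 1 from by
    rw [abs_of_pos (by positivity)]; field_simp]
  rw [one_smul]
  congr 1 with η
  rw [smul_eq_mul]
  have harg : (2*π)⁻¹ • (ε • ((2*π) • η)) = ε • η := by
    rw [smul_smul, smul_smul, show (2*π)⁻¹ * ε * (2*π) = ε from by field_simp]
  rw [harg]
  rw [show (⟪x, (2*π) • η⟫ : ℝ) = 2*π*⟪x,η⟫ from real_inner_smul_right _ _ _]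
  rw [show (⟪η, -x⟫ : ℝ) = -⟪x,η⟫ from by rw [inner_neg_right, real_inner_comm]]
  push_cast
  ring_nf

/-- If `u ∈ H^{-∞,i}`, i.e. `û = g ∈ C^i` with polynomially growing derivatives up to
order `i`, then `|x^β ∂^α u_ε(x)| ≤ C ε^{-n-|α|-p}` for `|β| ≤ i`, and in particular
`|∂^α u_ε(x)| ≤ C' ε^{-n-|α|-p} ⟨x⟩^{-i}`. -/
theorem stmt_4 (n i : ℕ) (g : EuclideanSpace ℝ (Fin n) → ℂ)
    (hg : ContDiff ℝ (i : ℕ∞) g)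
    (hgbd : ∀ k ≤ i, ∃ C pk : ℝ, 0 ≤ pk ∧ ∀ ξ,
      ‖iteratedFDeriv ℝ k g ξ‖ ≤ C * Real.sqrt (1 + ‖ξ‖ ^ 2) ^ pk)
    (φ : SchwartzMap (EuclideanSpace ℝ (Fin n)) ℂ) :
    ∃ p : ℝ, 0 ≤ p ∧ ∀ k : ℕ, ∃ C > 0, ∃ C' > 0,
      ∀ β : Fin n → ℕ, (∑ j, β j) ≤ i → ∀ ε ∈ Ioc (0:ℝ) 1, ∀ x,
        (∏ j, |x j| ^ β j) * ‖iteratedFDeriv ℝ k (regConv n g φ ε) x‖ ≤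
          C * ε ^ (-(n + k : ℝ) - p) ∧
        ‖iteratedFDeriv ℝ k (regConv n g φ ε) x‖ ≤
          C' * ε ^ (-(n + k : ℝ) - p) * Real.sqrt (1 + ‖x‖ ^ 2) ^ (-(i : ℝ)) := by
  classical
  have h2π : (0:ℝ) < 2*π := by positivity
  obtain ⟨D, P, hD1, hgD⟩ :
      ∃ (D : ℝ) (P : ℕ), 1 ≤ D ∧ ∀ k ≤ i, ∀ ξ : EuclideanSpace ℝ (Fin n),
        ‖iteratedFDeriv ℝ k g ξ‖ ≤ D * (1+‖ξ‖)^P := by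
    have hgbd' : ∀ k : ℕ, ∃ C pk : ℝ, 0 ≤ pk ∧ (k ≤ i → ∀ ξ,
        ‖iteratedFDeriv ℝ k g ξ‖ ≤ C * Real.sqrt (1 + ‖ξ‖ ^ 2) ^ pk) := by
      intro k
      by_cases hk : k ≤ i
      · obtain ⟨C, pk, h0, hb⟩ := hgbd k hk
        exact ⟨C, pk, h0, fun _ => hb⟩
      · exact ⟨0, 0, le_rfl, fun h => absurd h hk⟩
    choose Cg pg hpg hCg using hgbd'
    refine ⟨1 + ∑ k ∈ Finset.range (i+1), |Cg k|,
      (Finset.range (i+1)).sup (fun k => ⌈pg k⌉₊),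
      le_add_of_nonneg_right (Finset.sum_nonneg fun _ _ => abs_nonneg _), ?_⟩
    intro k hk ξ
    have hmem : k ∈ Finset.range (i+1) := Finset.mem_range.2 (Nat.lt_succ_of_le hk)
    have hbase : (1:ℝ) ≤ 1 + ‖ξ‖ := by have := norm_nonneg ξ; linarith
    have hsq : Real.sqrt (1+‖ξ‖^2) ≤ 1 + ‖ξ‖ := by
      have : Real.sqrt (1+‖ξ‖^2) ≤ Real.sqrt ((1+‖ξ‖)^2) :=
        Real.sqrt_le_sqrt (by nlinarith [norm_nonneg ξ])
      rwa [Real.sqrt_sq (by linarith)] at this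
    have hpP : pg k ≤ ((((Finset.range (i+1)).sup (fun k => ⌈pg k⌉₊)) : ℕ) : ℝ) := by
      have hle : ⌈pg k⌉₊ ≤ (Finset.range (i+1)).sup (fun k => ⌈pg k⌉₊) :=
        Finset.le_sup (f := fun k => ⌈pg k⌉₊) hmem
      exact (Nat.le_ceil (pg k)).trans (by exact_mod_cast hle)
    calc ‖iteratedFDeriv ℝ k g ξ‖ ≤ Cg k * Real.sqrt (1+‖ξ‖^2) ^ pg k := hCg k hk ξ
      _ ≤ (1 + ∑ j ∈ Finset.range (i+1), |Cg j|) *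
          (1+‖ξ‖) ^ (((Finset.range (i+1)).sup (fun k => ⌈pg k⌉₊) : ℕ) : ℝ) := by
        have h1 : Real.sqrt (1+‖ξ‖^2) ^ pg k ≤ (1+‖ξ‖) ^ (((Finset.range (i+1)).sup
            (fun k => ⌈pg k⌉₊) : ℕ) : ℝ) := by
          refine (Real.rpow_le_rpow (Real.sqrt_nonneg _) hsq (hpg k)).trans ?_
          exact Real.rpow_le_rpow_of_exponent_le hbase hpP
        have h2 : Cg k ≤ 1 + ∑ j ∈ Finset.range (i+1), |Cg j| := by
          have := Finset.single_le_sum (f := fun j => |Cg j|) (fun _ _ => abs_nonneg _) hmem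
          have := le_abs_self (Cg k)
          linarith
        have h3 : (0:ℝ) ≤ Real.sqrt (1+‖ξ‖^2) ^ pg k := by positivity
        refine mul_le_mul h2 h1 h3 (by positivity)
      _ = (1 + ∑ j ∈ Finset.range (i+1), |Cg j|) *
          (1+‖ξ‖) ^ ((Finset.range (i+1)).sup (fun k => ⌈pg k⌉₊)) := by
        rw [Real.rpow_natCast]
  set ψ : SchwartzMap (EuclideanSpace ℝ (Fin n)) ℂ := SchwartzMap.fourierTransformCLM ℝ φ
    with hψdef
  set H : ℝ → EuclideanSpace ℝ (Fin n) → ℂ :=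
    fun ε η => g ((2*π) • η) * ψ (ε • η) with hHdef
  have hHrw : ∀ ε : ℝ, regConv n g φ ε = fun x => 𝓕 (H ε) (-x) := by
    intro ε; funext x
    rw [aux_reg_eq n g φ ε x]
    rfl
  have hg2 : ContDiff ℝ (i:ℕ∞) (fun η : EuclideanSpace ℝ (Fin n) => g ((2*π) • η)) :=
    hg.comp (contDiff_const_smul (2*π))
  have hHsm : ∀ ε : ℝ, ContDiff ℝ (i:ℕ∞) (H ε) := fun ε =>
    hg2.mul (((ψ.smooth ⊤).of_le (by exact_mod_cast le_top)).comp (contDiff_const_smul ε))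
  have key : ∀ k' : ℕ, ∃ K : ℝ, 0 < K ∧ ∀ ε ∈ Ioc (0:ℝ) 1, ∀ m ≤ i,
      ∀ v : EuclideanSpace ℝ (Fin n),
      ‖v‖^k' * ‖iteratedFDeriv ℝ m (H ε) v‖ ≤
        K * (ε ^ (k'+P+n+1))⁻¹ * ((1+‖v‖)^(n+1))⁻¹ := by
    intro k'
    set d : ℕ := k'+P+n+1 with hd
    set S : ℝ := 2^d * ((Finset.Iic (d,i)).sup (fun m => SchwartzMap.seminorm ℝ m.1 m.2)) ψ
      with hSdef
    have hSnn : (0:ℝ) ≤ S := by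
      rw [hSdef]
      exact mul_nonneg (by positivity) (apply_nonneg _ _)
    have hψS : ∀ l ≤ i, ∀ w : EuclideanSpace ℝ (Fin n),
        (1+‖w‖)^d * ‖iteratedFDeriv ℝ l (⇑ψ) w‖ ≤ S := by
      intro l hl w
      rw [hSdef]
      exact SchwartzMap.one_add_le_sup_seminorm_apply (𝕜 := ℝ) (m := (d,i)) le_rfl hl ψ w
    have h1le : (1:ℝ) ≤ 2*π := by nlinarith [Real.pi_gt_three]
    have hDpos : (0:ℝ) < D := lt_of_lt_of_le one_pos hD1
    refine ⟨2^i * (2*π)^(i+P) * D * (S+1), by positivity, ?_⟩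
    rintro ε ⟨hε0, hε1⟩ m hm v
    set a : ℝ := 1 + ‖v‖ with ha
    have ha1 : (1:ℝ) ≤ a := le_add_of_nonneg_right (norm_nonneg v)
    have ha0 : (0:ℝ) < a := lt_of_lt_of_le one_pos ha1
    have hεd : (0:ℝ) < ε ^ d := pow_pos hε0 d
    -- bound for the g-factor
    have hg2bd : ∀ j ≤ i, ‖iteratedFDeriv ℝ j (fun η : EuclideanSpace ℝ (Fin n) =>
        g ((2*π) • η)) v‖ ≤ (2*π)^(i+P) * D * a^P := by
      intro j hj
      have h1 := aux_comp_smul hg (2*π) (by exact_mod_cast Nat.cast_le.2 hj) v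
      have h2 := hgD j hj ((2*π) • v)
      have h3 : ‖(2*π) • v‖ = (2*π) * ‖v‖ := by
        rw [norm_smul, Real.norm_eq_abs, abs_of_pos h2π]
      have h4 : (1 + ‖(2*π) • v‖)^P ≤ (2*π)^P * a^P := by
        rw [← mul_pow]
        refine pow_le_pow_left₀ (by positivity) ?_ P
        rw [h3, ha]; nlinarith [norm_nonneg v]
      calc ‖iteratedFDeriv ℝ j (fun η : EuclideanSpace ℝ (Fin n) => g ((2*π) • η)) v‖
          ≤ |2*π| ^ j * ‖iteratedFDeriv ℝ j g ((2*π) • v)‖ := h1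
        _ ≤ (2*π) ^ j * (D * ((2*π)^P * a^P)) := by
            rw [abs_of_pos h2π]
            refine mul_le_mul_of_nonneg_left (h2.trans ?_) (by positivity)
            exact mul_le_mul_of_nonneg_left h4 (le_of_lt hDpos)
        _ ≤ (2*π) ^ i * (D * ((2*π)^P * a^P)) := by
            refine mul_le_mul_of_nonneg_right (pow_le_pow_right₀ h1le hj) (by positivity)
        _ = (2*π)^(i+P) * D * a^P := by rw [pow_add]; ring
    -- bound for the ψ-factor
    have hψεbd : ∀ l ≤ i, ‖iteratedFDeriv ℝ l (fun η : EuclideanSpace ℝ (Fin n) =>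
        ψ (ε • η)) v‖ ≤ S * (ε^d)⁻¹ * (a^d)⁻¹ := by
      intro l hl
      have h1 := aux_comp_smul (f := ⇑ψ) (ψ.smooth ⊤) ε (k := l)
        (by exact_mod_cast le_top : ((l:ℕ∞) : WithTop ℕ∞) ≤ ((⊤:ℕ∞) : WithTop ℕ∞)) v
      have h2 : |ε| ^ l ≤ 1 := by
        rw [abs_of_pos hε0]; exact pow_le_one₀ (le_of_lt hε0) hε1
      have h3 : ‖ε • v‖ = ε * ‖v‖ := by
        rw [norm_smul, Real.norm_eq_abs, abs_of_pos hε0]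
      have h4 : ‖iteratedFDeriv ℝ l (⇑ψ) (ε • v)‖ ≤ S * ((1 + ‖ε • v‖)^d)⁻¹ := by
        have h5 := hψS l hl (ε • v)
        have h6 : (0:ℝ) < (1 + ‖ε • v‖)^d := by positivity
        rw [mul_comm] at h5
        rw [mul_comm S]
        exact (le_div_iff₀ h6).2 h5 |>.trans (le_of_eq (div_eq_inv_mul _ _))
      have h7 : ((1 + ‖ε • v‖)^d)⁻¹ ≤ (ε^d)⁻¹ * (a^d)⁻¹ := by
        rw [← mul_inv, ← mul_pow]
        refine inv_anti₀ (by positivity) ?_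
        refine pow_le_pow_left₀ (by positivity) ?_ d
        rw [h3, ha]; nlinarith [norm_nonneg v]
      calc ‖iteratedFDeriv ℝ l (fun η : EuclideanSpace ℝ (Fin n) => ψ (ε • η)) v‖
          ≤ |ε| ^ l * ‖iteratedFDeriv ℝ l (⇑ψ) (ε • v)‖ := h1
        _ ≤ 1 * (S * ((1 + ‖ε • v‖)^d)⁻¹) :=
            mul_le_mul h2 h4 (norm_nonneg _) one_pos.le
        _ = S * ((1 + ‖ε • v‖)^d)⁻¹ := one_mul _
        _ ≤ S * ((ε^d)⁻¹ * (a^d)⁻¹) := mul_le_mul_of_nonneg_left h7 hSnn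
        _ = S * (ε^d)⁻¹ * (a^d)⁻¹ := by ring
    -- Leibniz
    have hψε : ContDiff ℝ (i:ℕ∞) (fun η : EuclideanSpace ℝ (Fin n) => ψ (ε • η)) :=
      ((ψ.smooth ⊤).of_le (by exact_mod_cast le_top)).comp (contDiff_const_smul ε)
    have hmn : (m : WithTop ℕ∞) ≤ ((i:ℕ∞) : WithTop ℕ∞) := by exact_mod_cast hm
    have hmul := norm_iteratedFDeriv_mul_le (𝕜 := ℝ) (n := m) hg2 hψε v hmn
    have hsum : ‖iteratedFDeriv ℝ m (H ε) v‖ ≤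
        2^i * ((2*π)^(i+P) * D * a^P * (S * (ε^d)⁻¹ * (a^d)⁻¹)) := by
      refine hmul.trans ?_
      calc ∑ j ∈ Finset.range (m+1), (m.choose j : ℝ) *
            ‖iteratedFDeriv ℝ j (fun η : EuclideanSpace ℝ (Fin n) => g ((2*π) • η)) v‖ *
            ‖iteratedFDeriv ℝ (m-j) (fun η : EuclideanSpace ℝ (Fin n) => ψ (ε • η)) v‖
          ≤ ∑ j ∈ Finset.range (m+1), (m.choose j : ℝ) *
            ((2*π)^(i+P) * D * a^P) * (S * (ε^d)⁻¹ * (a^d)⁻¹) := by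
            refine Finset.sum_le_sum fun j hj => ?_
            have hjm : j ≤ m := Nat.lt_succ_iff.1 (Finset.mem_range.1 hj)
            refine mul_le_mul (mul_le_mul_of_nonneg_left
              (hg2bd j (hjm.trans hm)) (by positivity))
              (hψεbd (m-j) ((Nat.sub_le m j).trans hm)) (norm_nonneg _) (by positivity)
        _ = (∑ j ∈ Finset.range (m+1), (m.choose j : ℝ)) *
            ((2*π)^(i+P) * D * a^P * (S * (ε^d)⁻¹ * (a^d)⁻¹)) := by
            rw [Finset.sum_mul]; congr 1 with j; ring
        _ ≤ 2^i * ((2*π)^(i+P) * D * a^P * (S * (ε^d)⁻¹ * (a^d)⁻¹)) := by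
            refine mul_le_mul_of_nonneg_right ?_ (by positivity)
            have h2m : (∑ j ∈ Finset.range (m+1), (m.choose j : ℝ)) = 2^m := by
              exact_mod_cast congrArg (Nat.cast : ℕ → ℝ) (Nat.sum_range_choose m)
            rw [h2m]
            exact pow_le_pow_right₀ (by norm_num : (1:ℝ) ≤ 2) hm
    -- final algebra
    have haid : a^k' * a^P * (a^d)⁻¹ = (a^(n+1))⁻¹ := by
      have : a^d = a^(k'+P) * a^(n+1) := by rw [show d = (k'+P)+(n+1) from by omega, pow_add]
      rw [this, ← pow_add, mul_inv, ← mul_assoc, mul_inv_cancel₀ (by positivity), one_mul]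
    calc ‖v‖^k' * ‖iteratedFDeriv ℝ m (H ε) v‖
        ≤ a^k' * (2^i * ((2*π)^(i+P) * D * a^P * (S * (ε^d)⁻¹ * (a^d)⁻¹))) := by
          refine mul_le_mul (pow_le_pow_left₀ (norm_nonneg v)
            (by rw [ha]; linarith [norm_nonneg v] : ‖v‖ ≤ a) k')
            hsum (norm_nonneg _) (by positivity)
      _ = (2^i * (2*π)^(i+P) * D * S) * (ε^d)⁻¹ * (a^k' * a^P * (a^d)⁻¹) := by ring
      _ = (2^i * (2*π)^(i+P) * D * S) * (ε^d)⁻¹ * (a^(n+1))⁻¹ := by rw [haid]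
      _ ≤ (2^i * (2*π)^(i+P) * D * (S+1)) * (ε^d)⁻¹ * (a^(n+1))⁻¹ := by
          refine mul_le_mul_of_nonneg_right (mul_le_mul_of_nonneg_right ?_ (by positivity))
            (by positivity)
          exact mul_le_mul_of_nonneg_left (by linarith : S ≤ S + 1)
            (by positivity : (0:ℝ) ≤ 2^i * (2*π)^(i+P) * D)
  have hInt : ∀ ε ∈ Ioc (0:ℝ) 1, ∀ (k' m : ℕ), m ≤ i →
      Integrable (fun v : EuclideanSpace ℝ (Fin n) =>
        ‖v‖^k' * ‖iteratedFDeriv ℝ m (H ε) v‖) := by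
    rintro ε hε k' m hm
    obtain ⟨K, hK, hkey⟩ := key k'
    have hfin : ((Module.finrank ℝ (EuclideanSpace ℝ (Fin n)) : ℝ)) < (n:ℝ)+1 := by
      rw [finrank_euclideanSpace_fin]; linarith
    have h1 := (integrable_one_add_norm (E := EuclideanSpace ℝ (Fin n)) (μ := volume)
      hfin).const_mul (K * (ε ^ (k'+P+n+1))⁻¹)
    have heq : ∀ v : EuclideanSpace ℝ (Fin n),
        ((1:ℝ)+‖v‖) ^ (-((n:ℝ)+1)) = (((1:ℝ)+‖v‖)^(n+1))⁻¹ := fun v => by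
      rw [show -((n:ℝ)+1) = -(((n+1:ℕ)):ℝ) by push_cast; ring,
        Real.rpow_neg (by positivity), Real.rpow_natCast]
    have hcont : Continuous (fun v : EuclideanSpace ℝ (Fin n) =>
        ‖v‖^k' * ‖iteratedFDeriv ℝ m (H ε) v‖) :=
      (continuous_norm.pow k').mul
        ((hHsm ε).continuous_iteratedFDeriv (by exact_mod_cast hm)).norm
    refine h1.mono' hcont.aestronglyMeasurable ?_
    filter_upwards with v
    rw [Real.norm_eq_abs, abs_of_nonneg (by positivity)]
    calc ‖v‖^k' * ‖iteratedFDeriv ℝ m (H ε) v‖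
        ≤ K * (ε ^ (k'+P+n+1))⁻¹ * (((1:ℝ)+‖v‖)^(n+1))⁻¹ := hkey ε hε m hm v
      _ = K * (ε ^ (k'+P+n+1))⁻¹ * ((1:ℝ)+‖v‖) ^ (-((n:ℝ)+1)) := by rw [heq]
  refine ⟨(P:ℝ)+1, by positivity, ?_⟩
  intro k
  obtain ⟨C0, hC0, hmaster⟩ : ∃ C0 > 0, ∀ ε ∈ Ioc (0:ℝ) 1, ∀ m ≤ i,
      ∀ w : EuclideanSpace ℝ (Fin n),
      ‖w‖^m * ‖iteratedFDeriv ℝ k (𝓕 (H ε)) w‖ ≤ C0 * ε ^ (-(n + k : ℝ) - ((P:ℝ)+1)) := by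
    choose Kf hKfpos hKf using key
    set KS : ℝ := ∑ j ∈ Finset.range (k+1), Kf j with hKSdef
    have hKSpos : 0 < KS := Finset.sum_pos (fun j _ => hKfpos j) ⟨0, Finset.mem_range.2 (by omega)⟩
    have hKSle : ∀ j ∈ Finset.range (k+1), Kf j ≤ KS := fun j hj =>
      Finset.single_le_sum (f := Kf) (fun l _ => (hKfpos l).le) hj
    -- the integral of the decay majorant
    have hfin : ((Module.finrank ℝ (EuclideanSpace ℝ (Fin n)) : ℝ)) < (n:ℝ)+1 := by
      rw [finrank_euclideanSpace_fin]; linarith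
    have heq : ∀ v : EuclideanSpace ℝ (Fin n),
        ((1:ℝ)+‖v‖) ^ (-((n:ℝ)+1)) = (((1:ℝ)+‖v‖)^(n+1))⁻¹ := fun v => by
      rw [show -((n:ℝ)+1) = -(((n+1:ℕ)):ℝ) by push_cast; ring,
        Real.rpow_neg (by positivity), Real.rpow_natCast]
    have hIntIn : Integrable (fun v : EuclideanSpace ℝ (Fin n) => (((1:ℝ)+‖v‖)^(n+1))⁻¹) := by
      refine (integrable_one_add_norm (E := EuclideanSpace ℝ (Fin n)) (μ := volume)
        hfin).congr (Filter.Eventually.of_forall fun v => heq v)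
    set In : ℝ := ∫ v : EuclideanSpace ℝ (Fin n), (((1:ℝ)+‖v‖)^(n+1))⁻¹ with hIndef
    have hIn0 : 0 ≤ In := integral_nonneg fun v => by positivity
    refine ⟨(2*π)^k * (2*(k:ℝ)+2)^i * ((k+1)*(i+1)) * KS * (In+1), by positivity, ?_⟩
    rintro ε hε m hm w
    obtain ⟨hε0, hε1⟩ := hε
    -- ε-power bookkeeping
    have hrpow : ε ^ (-(n + k : ℝ) - ((P:ℝ)+1)) = (ε ^ (k+P+n+1))⁻¹ := by
      rw [show -(n + k : ℝ) - ((P:ℝ)+1) = -(((k+P+n+1 : ℕ)):ℝ) by push_cast; ring,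
        Real.rpow_neg hε0.le, Real.rpow_natCast]
    -- integral bounds
    have hA : ∀ p1 ∈ Finset.range (k+1), ∀ p2 ∈ Finset.range (i+1),
        (∫ v : EuclideanSpace ℝ (Fin n), ‖v‖^p1 * ‖iteratedFDeriv ℝ p2 (H ε) v‖) ≤
          KS * (In+1) * (ε ^ (k+P+n+1))⁻¹ := by
      intro p1 hp1 p2 hp2
      have hp1k : p1 ≤ k := Nat.lt_succ_iff.1 (Finset.mem_range.1 hp1)
      have hp2i : p2 ≤ i := Nat.lt_succ_iff.1 (Finset.mem_range.1 hp2)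
      have hmono : (∫ v : EuclideanSpace ℝ (Fin n), ‖v‖^p1 * ‖iteratedFDeriv ℝ p2 (H ε) v‖)
          ≤ ∫ v : EuclideanSpace ℝ (Fin n),
            Kf p1 * (ε ^ (p1+P+n+1))⁻¹ * (((1:ℝ)+‖v‖)^(n+1))⁻¹ := by
        refine integral_mono (hInt ε ⟨hε0, hε1⟩ p1 p2 hp2i)
          ((hIntIn.const_mul _)) ?_
        intro v
        exact hKf p1 ε ⟨hε0, hε1⟩ p2 hp2i v
      have hεmono : (ε ^ (p1+P+n+1))⁻¹ ≤ (ε ^ (k+P+n+1))⁻¹ := by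
        refine inv_anti₀ (pow_pos hε0 _) ?_
        exact pow_le_pow_of_le_one hε0.le hε1 (by omega)
      calc (∫ v : EuclideanSpace ℝ (Fin n), ‖v‖^p1 * ‖iteratedFDeriv ℝ p2 (H ε) v‖)
          ≤ Kf p1 * (ε ^ (p1+P+n+1))⁻¹ * In := by
            rw [hIndef]
            simpa [integral_const_mul] using hmono
        _ ≤ KS * (ε ^ (k+P+n+1))⁻¹ * (In+1) := by
            refine mul_le_mul (mul_le_mul (hKSle p1 hp1) hεmono (by positivity)
              hKSpos.le) (by linarith) hIn0 (by positivity)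
        _ = KS * (In+1) * (ε ^ (k+P+n+1))⁻¹ := by ring
    -- main Fourier bound
    have hmain := Real.pow_mul_norm_iteratedFDeriv_fourier_le
      (K := (⊤ : ℕ∞)) (N := ((i:ℕ):ℕ∞)) (f := H ε) (k := k) (n := m) (hHsm ε)
      (fun k' n' _ hn' => hInt ε ⟨hε0, hε1⟩ k' n' (by exact_mod_cast hn'))
      (le_top) (by exact_mod_cast hm) w
    refine hmain.trans ?_
    rw [hrpow]
    have hsum1 : ∑ p ∈ Finset.range (k + 1) ×ˢ Finset.range (m + 1),
        (∫ v : EuclideanSpace ℝ (Fin n), ‖v‖ ^ p.1 * ‖iteratedFDeriv ℝ p.2 (H ε) v‖)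
        ≤ ∑ p ∈ Finset.range (k + 1) ×ˢ Finset.range (i + 1),
        (∫ v : EuclideanSpace ℝ (Fin n), ‖v‖ ^ p.1 * ‖iteratedFDeriv ℝ p.2 (H ε) v‖) := by
      refine Finset.sum_le_sum_of_subset_of_nonneg
        (Finset.product_subset_product_right (by simp [Finset.range_subset]; omega)) ?_
      intro p _ _
      exact integral_nonneg fun v => by positivity
    have hsum2 : ∑ p ∈ Finset.range (k + 1) ×ˢ Finset.range (i + 1),
        (∫ v : EuclideanSpace ℝ (Fin n), ‖v‖ ^ p.1 * ‖iteratedFDeriv ℝ p.2 (H ε) v‖)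
        ≤ ((k+1)*(i+1) : ℝ) * (KS * (In+1) * (ε ^ (k+P+n+1))⁻¹) := by
      refine (Finset.sum_le_card_nsmul _ _ (KS * (In+1) * (ε ^ (k+P+n+1))⁻¹) ?_).trans ?_
      · intro p hp
        obtain ⟨hp1, hp2⟩ := Finset.mem_product.1 hp
        exact hA p.1 hp1 p.2 hp2
      · rw [Finset.card_product, Finset.card_range, Finset.card_range, nsmul_eq_mul]
        push_cast
        apply le_of_eq
        ring
    calc (2*π)^k * (2*(k:ℝ)+2)^m * ∑ p ∈ Finset.range (k + 1) ×ˢ Finset.range (m + 1),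
        (∫ v : EuclideanSpace ℝ (Fin n), ‖v‖ ^ p.1 * ‖iteratedFDeriv ℝ p.2 (H ε) v‖)
        ≤ (2*π)^k * (2*(k:ℝ)+2)^i * (((k+1)*(i+1) : ℝ) * (KS * (In+1) * (ε ^ (k+P+n+1))⁻¹)) := by
          refine mul_le_mul (mul_le_mul_of_nonneg_left
            (pow_le_pow_right₀ (by linarith [Nat.cast_nonneg (α := ℝ) k] : (1:ℝ) ≤ 2*(k:ℝ)+2) hm)
            (by positivity)) (hsum1.trans hsum2)
            (Finset.sum_nonneg fun p _ => integral_nonneg fun v => by positivity) (by positivity)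
      _ = (2*π)^k * (2*(k:ℝ)+2)^i * ((k+1)*(i+1)) * KS * (In+1) * (ε ^ (k+P+n+1))⁻¹ := by
          ring
  refine ⟨C0, hC0, 2^i * C0, by positivity, ?_⟩
  intro β hβ ε hε x
  have hnorm : ‖iteratedFDeriv ℝ k (regConv n g φ ε) x‖
      = ‖iteratedFDeriv ℝ k (𝓕 (H ε)) (-x)‖ := by
    rw [hHrw ε]
    have h0 : (fun x : EuclideanSpace ℝ (Fin n) => 𝓕 (H ε) (-x))
        = (𝓕 (H ε)) ∘ (LinearIsometryEquiv.neg ℝ (E := EuclideanSpace ℝ (Fin n))) := rfl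
    rw [h0, LinearIsometryEquiv.norm_iteratedFDeriv_comp_right]
    simp
  constructor
  · have hcoord : ∀ j, |x j| ≤ ‖x‖ := by
      intro j
      rw [EuclideanSpace.norm_eq, show |x j| = Real.sqrt ((x j)^2) from
        (Real.sqrt_sq_eq_abs _).symm]
      apply Real.sqrt_le_sqrt
      rw [show (x j)^2 = ‖x j‖^2 from by rw [Real.norm_eq_abs, sq_abs]]
      exact Finset.single_le_sum (f := fun j => ‖x j‖^2) (fun l _ => sq_nonneg _)
        (Finset.mem_univ j)
    have hprod : (∏ j, |x j| ^ β j) ≤ ‖x‖ ^ (∑ j, β j) := by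
      rw [← Finset.prod_pow_eq_pow_sum]
      exact Finset.prod_le_prod (fun j _ => by positivity)
        (fun j _ => pow_le_pow_left₀ (abs_nonneg _) (hcoord j) _)
    rw [hnorm]
    calc (∏ j, |x j| ^ β j) * ‖iteratedFDeriv ℝ k (𝓕 (H ε)) (-x)‖
        ≤ ‖x‖ ^ (∑ j, β j) * ‖iteratedFDeriv ℝ k (𝓕 (H ε)) (-x)‖ :=
          mul_le_mul_of_nonneg_right hprod (norm_nonneg _)
      _ = ‖-x‖ ^ (∑ j, β j) * ‖iteratedFDeriv ℝ k (𝓕 (H ε)) (-x)‖ := by rw [norm_neg]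
      _ ≤ C0 * ε ^ (-(n + k : ℝ) - ((P:ℝ)+1)) := hmaster ε hε (∑ j, β j) hβ (-x)
  · set b : ℝ := Real.sqrt (1 + ‖x‖^2) with hb
    have hb1 : (1:ℝ) ≤ b := by
      rw [hb]
      have h := Real.sqrt_le_sqrt ((le_add_of_nonneg_right (sq_nonneg ‖x‖) : (1:ℝ) ≤ 1 + ‖x‖^2))
      rwa [Real.sqrt_one] at h
    have hb0 : (0:ℝ) < b := lt_of_lt_of_le one_pos hb1
    have hble : b ≤ 1 + ‖x‖ := by
      rw [hb]
      have hs := Real.sqrt_le_sqrt (show 1 + ‖x‖^2 ≤ (1+‖x‖)^2 from by nlinarith [norm_nonneg x])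
      rwa [Real.sqrt_sq (by linarith [norm_nonneg x])] at hs
    have hbpow : b ^ (-(i:ℝ)) = ((b^i : ℝ))⁻¹ := by
      rw [Real.rpow_neg hb0.le, Real.rpow_natCast]
    have h2i : (∑ m ∈ Finset.range (i+1), (i.choose m : ℝ)) = 2^i := by
      exact_mod_cast congrArg (Nat.cast : ℕ → ℝ) (Nat.sum_range_choose i)
    have hbin : ((1:ℝ)+‖x‖)^i = ∑ m ∈ Finset.range (i+1), ‖x‖^m * (i.choose m : ℝ) := by
      rw [show (1:ℝ)+‖x‖ = ‖x‖+1 from by ring, add_pow]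
      simp
    have hq0 : (0:ℝ) < ε ^ (-(n + k : ℝ) - ((P:ℝ)+1)) := Real.rpow_pos_of_pos hε.1 _
    rw [hnorm, hbpow, show 2^i * C0 * ε ^ (-(n + k : ℝ) - ((P:ℝ)+1)) * ((b^i : ℝ))⁻¹
      = (2^i * C0 * ε ^ (-(n + k : ℝ) - ((P:ℝ)+1))) / b^i from by ring,
      le_div_iff₀ (pow_pos hb0 i)]
    calc ‖iteratedFDeriv ℝ k (𝓕 (H ε)) (-x)‖ * b^i
        ≤ ‖iteratedFDeriv ℝ k (𝓕 (H ε)) (-x)‖ * ((1:ℝ)+‖x‖)^i :=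
          mul_le_mul_of_nonneg_left (pow_le_pow_left₀ hb0.le hble i) (norm_nonneg _)
      _ = ∑ m ∈ Finset.range (i+1), (i.choose m : ℝ) *
            (‖-x‖^m * ‖iteratedFDeriv ℝ k (𝓕 (H ε)) (-x)‖) := by
          rw [hbin, Finset.mul_sum]
          refine Finset.sum_congr rfl fun m _ => ?_
          rw [norm_neg]; ring
      _ ≤ ∑ m ∈ Finset.range (i+1), (i.choose m : ℝ) *
            (C0 * ε ^ (-(n + k : ℝ) - ((P:ℝ)+1))) := by
          refine Finset.sum_le_sum fun m hm => ?_
          exact mul_le_mul_of_nonneg_left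
            (hmaster ε hε m (Nat.lt_succ_iff.1 (Finset.mem_range.1 hm)) (-x))
            (Nat.cast_nonneg _)
      _ = 2^i * C0 * ε ^ (-(n + k : ℝ) - ((P:ℝ)+1)) := by
          rw [← Finset.sum_mul, h2i]; ring
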